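/- For the standard normal CDF Φ and mean shift d > 0, the odds ratio OR(t) = [Φ(d−t)/Φ(t−d)] · [Φ(−t)/Φ(t)]⁻¹ comparing the odds of exceeding threshold t for a N(d,1) versus a N(0,1) variable is strictly greater than 1 for every real t. -/
import Mathlib


open MeasureTheory ProbabilityTheory

/-- The standard normal cumulative distribution function. -/
noncomputable def stdNormalCDF (x : ℝ) : ℝ := (gaussianReal 0 1 (Set.Iic x)).toReal

lemma stdNormalCDF_pos (x : ℝ) : 0 < stdNormalCDF x := by
  have hne : (gaussianReal 0 1 (Set.Iic x)) ≠ 0 := by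
    intro h
    have := (gaussianReal_absolutelyContinuous' 0 (by norm_num)) h
    simp at this
  have hfin : (gaussianReal 0 1 (Set.Iic x)) ≠ ⊤ := measure_ne_top _ _
  exact ENNReal.toReal_pos hne hfin

lemma stdNormalCDF_strictMono : StrictMono stdNormalCDF := by
  intro x y hxy
  unfold stdNormalCDF
  have hsub : Set.Iic x ⊆ Set.Iic y := Set.Iic_subset_Iic.mpr hxy.le
  have hlt : (gaussianReal 0 1 (Set.Iic x)) < (gaussianReal 0 1 (Set.Iic y)) := by
    rw [show Set.Iic y = Set.Iic x ∪ Set.Ioc x y by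
      rw [Set.Iic_union_Ioc_eq_Iic hxy.le]]
    rw [measure_union (by simp [Set.disjoint_left]; intro a ha; exact fun h => absurd h (not_lt.mpr ha)) measurableSet_Ioc]
    have hpos : 0 < (gaussianReal 0 1 (Set.Ioc x y)) := by
      rw [pos_iff_ne_zero]
      intro h
      have := (gaussianReal_absolutelyContinuous' 0 (by norm_num)) h
      rw [Real.volume_Ioc] at this
      simp [ENNReal.ofReal_eq_zero, sub_pos.mpr hxy] at this
      linarith
    exact ENNReal.lt_add_right (measure_ne_top _ _) hpos.ne'
  exact ENNReal.toReal_strict_mono (measure_ne_top _ _) hlt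

/-- For a mean shift `d > 0`, the odds ratio comparing the odds of exceeding threshold `t`
for `N(d,1)` versus `N(0,1)` is strictly greater than 1 for every real `t`. -/
theorem oddsRatio_gaussian_shift_gt_one (d : ℝ) (hd : 0 < d) (t : ℝ) :
    1 < (stdNormalCDF (d - t) / stdNormalCDF (t - d)) /
        (stdNormalCDF (-t) / stdNormalCDF t) := by
  have hab : -t < d - t := by linarith
  have h1 := stdNormalCDF_strictMono hab
  have h2 := stdNormalCDF_strictMono (show t - d < t by linarith)
  have pa := stdNormalCDF_pos (-t)
  have pb := stdNormalCDF_pos (d - t)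
  have pc := stdNormalCDF_pos (t - d)
  have pt := stdNormalCDF_pos t
  rw [one_lt_div (by positivity), div_lt_div_iff₀ pt pc]
  nlinarith
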